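/- arXiv:2408.05650 — 4 statements merged into one kernel-verified Lean document; each statement's English description precedes it below -/
import Mathlib

section
/- Let ε_j, δ_j be sequences of positive reals with ε_j → 0, δ_j → 0, and ε_j/δ_j → 0. Let f : ℝ → ℝ be 1-periodic, and suppose for every x₀ ∈ ℝ and every j there exists a 1-periodic function g_{j,x₀} : ℝ → ℝ that is strictly increasing on [0,1) such that |f(x) − g_{j,x₀}(x)| < ε_j for all x ∈ (x₀ − δ_j, x₀ + δ_j). Then f is non-decreasing on [0,1). -/
theorem monotone_from_local_approx
    (ε δ : ℕ → ℝ) (hε : ∀ j, 0 < ε j) (hδ : ∀ j, 0 < δ j)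
    (hε0 : Filter.Tendsto ε Filter.atTop (nhds 0))
    (hδ0 : Filter.Tendsto δ Filter.atTop (nhds 0))
    (hratio : Filter.Tendsto (fun j => ε j / δ j) Filter.atTop (nhds 0))
    (f : ℝ → ℝ) (hf : ∀ x, f (x + 1) = f x)
    (happrox : ∀ (x₀ : ℝ) (j : ℕ), ∃ g : ℝ → ℝ,
      (∀ x, g (x + 1) = g x) ∧ StrictMonoOn g (Set.Ico (0 : ℝ) 1) ∧
      ∀ x ∈ Set.Ioo (x₀ - δ j) (x₀ + δ j), |f x - g x| < ε j) :
    ∀ x y : ℝ, 0 ≤ x → x ≤ y → y < 1 → f x ≤ f y := by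
  have step : ∀ j : ℕ, ∀ a b : ℝ, 0 ≤ a → a ≤ b → b < 1 → b - a < δ j →
      f a ≤ f b + 2 * ε j := by
    intro j a b ha hab hb hlt
    obtain ⟨g, hgp, hgm, hg⟩ := happrox a j
    have ha' : a ∈ Set.Ioo (a - δ j) (a + δ j) := by
      constructor <;> linarith [hδ j]
    have hb' : b ∈ Set.Ioo (a - δ j) (a + δ j) := by
      constructor <;> linarith [hδ j]
    have h1 := hg a ha'
    have h2 := hg b hb'
    have h3 : g a ≤ g b :=
      hgm.monotoneOn ⟨ha, lt_of_le_of_lt hab hb⟩ ⟨le_trans ha hab, hb⟩ hab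
    rw [abs_lt] at h1 h2
    linarith [h1.1, h1.2, h2.1, h2.2]
  intro x y hx hxy hy
  have key : ∀ j : ℕ, ∀ N : ℕ, 0 < N → (y - x) / N < δ j →
      f x ≤ f y + 2 * N * ε j := by
    intro j N hN hlt
    set h := (y - x) / N with hh
    have hNpos : (0:ℝ) < N := Nat.cast_pos.mpr hN
    have hh0 : 0 ≤ h := div_nonneg (by linarith) hNpos.le
    have hNh : (N:ℝ) * h = y - x := by
      rw [hh]; field_simp
    have main : ∀ k : ℕ, k ≤ N → f x ≤ f (x + k * h) + 2 * k * ε j := by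
      intro k
      induction k with
      | zero => intro _; simp
      | succ k ih =>
        intro hk
        have hk' : k ≤ N := Nat.le_of_succ_le hk
        have hkN : (k:ℝ) + 1 ≤ N := by exact_mod_cast hk
        have hkr : (k:ℝ) ≤ N := by exact_mod_cast hk'
        have ht1 : x + (k:ℝ) * h ≤ x + ((k:ℝ) + 1) * h := by nlinarith
        have ht2 : x + ((k:ℝ) + 1) * h ≤ y := by nlinarith
        have ht0 : 0 ≤ x + (k:ℝ) * h := by nlinarith
        have hstep := step j (x + (k:ℝ) * h) (x + ((k:ℝ) + 1) * h) ht0 ht1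
          (lt_of_le_of_lt ht2 hy) (by linarith)
        have hih := ih hk'
        push_cast
        linarith
    have hmain := main N le_rfl
    have hxy' : x + (N:ℝ) * h = y := by linarith
    rw [hxy'] at hmain
    exact hmain
  have hbound : ∀ j : ℕ, f x - f y ≤ 2 * (y - x) * (ε j / δ j) + 6 * ε j := by
    intro j
    set N := ⌈(y - x) / δ j⌉₊ + 1 with hN
    have hNpos : 0 < N := Nat.succ_pos _
    have hr0 : 0 ≤ (y - x) / δ j := div_nonneg (by linarith) (hδ j).le
    have hceil : ((⌈(y - x) / δ j⌉₊ : ℝ)) < (y - x) / δ j + 1 := Nat.ceil_lt_add_one hr0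
    have hle : (y - x) / δ j ≤ (⌈(y - x) / δ j⌉₊ : ℝ) := Nat.le_ceil _
    have hNge : (y - x) / δ j < (N : ℝ) := by
      push_cast [hN]; linarith
    have hNR : (0:ℝ) < N := Nat.cast_pos.mpr hNpos
    have hyx : y - x < (N : ℝ) * δ j := by
      have := (div_lt_iff₀ (hδ j)).mp hNge
      linarith
    have hlt : (y - x) / N < δ j := by
      rw [div_lt_iff₀ hNR]
      linarith
    have hkey := key j N hNpos hlt
    have hNle : (N : ℝ) ≤ (y - x) / δ j + 2 := by
      push_cast [hN]; linarith
    have hmul : 2 * (N : ℝ) * ε j ≤ 2 * ((y - x) / δ j + 2) * ε j := by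
      have := mul_le_mul_of_nonneg_right hNle (hε j).le
      nlinarith
    have heq : 2 * ((y - x) / δ j + 2) * ε j = 2 * (y - x) * (ε j / δ j) + 4 * ε j := by
      field_simp
      ring
    have := hε j
    linarith [hmul, hkey]
  have hc : Filter.Tendsto (fun j => 2 * (y - x) * (ε j / δ j) + 6 * ε j)
      Filter.atTop (nhds 0) := by
    have := (hratio.const_mul (2 * (y - x))).add (hε0.const_mul 6)
    simpa using this
  have := ge_of_tendsto' hc hbound
  linarith
end

section
/- Let ε_j, δ_j be sequences of positive reals with ε_j → 0, δ_j → 0, and ε_j/δ_j → 0. Let f : ℝ → ℝ be 1-periodic, and suppose for every x₀ ∈ ℝ and every j there exists a 1-periodic function g_{j,x₀} : ℝ → ℝ, Lipschitz monotone on [0,1) (i.e. g(y) − g(x) ≥ y − x for 0 ≤ x ≤ y < 1), such that |f(x) − g_{j,x₀}(x)| < ε_j for all x ∈ (x₀ − δ_j, x₀ + δ_j). Then f is Lipschitz monotone on [0,1): f(y) − f(x) ≥ y − x for all 0 ≤ x ≤ y < 1. -/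
theorem lipschitz_monotone_from_local_approx
    (ε δ : ℕ → ℝ) (hε : ∀ j, 0 < ε j) (hδ : ∀ j, 0 < δ j)
    (hε0 : Filter.Tendsto ε Filter.atTop (nhds 0))
    (hδ0 : Filter.Tendsto δ Filter.atTop (nhds 0))
    (hratio : Filter.Tendsto (fun j => ε j / δ j) Filter.atTop (nhds 0))
    (f : ℝ → ℝ) (hf : ∀ x, f (x + 1) = f x)
    (happrox : ∀ (x₀ : ℝ) (j : ℕ), ∃ g : ℝ → ℝ,
      (∀ x, g (x + 1) = g x) ∧
      (∀ x y : ℝ, 0 ≤ x → x ≤ y → y < 1 → g y - g x ≥ y - x) ∧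
      ∀ x ∈ Set.Ioo (x₀ - δ j) (x₀ + δ j), |f x - g x| < ε j) :
    ∀ x y : ℝ, 0 ≤ x → x ≤ y → y < 1 → f y - f x ≥ y - x := by
  intro x y hx hxy hy1
  have lemA : ∀ (j : ℕ) (a b : ℝ), 0 ≤ a → a ≤ b → b < 1 → b - a < δ j →
      f b - f a ≥ (b - a) - 2 * ε j := by
    intro j a b ha hab hb1 hlt
    obtain ⟨g, hgper, hgmono, hgapprox⟩ := happrox a j
    have h1 : |f a - g a| < ε j := hgapprox a ⟨by linarith [hδ j], by linarith [hδ j]⟩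
    have h2 : |f b - g b| < ε j := hgapprox b ⟨by linarith [hδ j], by linarith⟩
    have h3 := hgmono a b ha hab hb1
    rw [abs_lt] at h1 h2
    linarith [h1.1, h1.2, h2.1, h2.2]
  have lemB : ∀ (j n : ℕ) (a b : ℝ), 0 ≤ a → a ≤ b → b < 1 → b - a ≤ n * (δ j / 2) →
      f b - f a ≥ (b - a) - 2 * n * ε j := by
    intro j n
    induction n with
    | zero =>
      intro a b ha hab hb1 hle
      simp only [Nat.cast_zero, zero_mul] at hle ⊢
      have : a = b := le_antisymm hab (by linarith)
      subst this; simp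
    | succ n ih =>
      intro a b ha hab hb1 hle
      by_cases h : b - a ≤ δ j / 2
      · have hA := lemA j a b ha hab hb1 (by linarith [hδ j])
        have hn : (0:ℝ) ≤ n := Nat.cast_nonneg n
        push_cast
        nlinarith [hε j]
      · push_neg at h
        set c := b - δ j / 2 with hc
        have hac : a ≤ c := by simp only [hc]; linarith
        have hcb : c ≤ b := by simp only [hc]; linarith [hδ j]
        have h0c : 0 ≤ c := le_trans ha hac
        have hc1 : c < 1 := lt_of_le_of_lt hcb hb1
        have hca : c - a ≤ n * (δ j / 2) := by
          push_cast at hle; simp only [hc]; linarith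
        have h1 := ih a c ha hac hc1 hca
        have h2 := lemA j c b h0c hcb hb1 (by simp only [hc]; linarith [hδ j])
        push_cast at h1 ⊢
        have : b - c = δ j / 2 := by simp [hc]
        linarith
  rcases eq_or_lt_of_le hxy with heq | hlt
  · subst heq; simp
  · have key : ∀ j, (y - x) - (4 * (y - x) * (ε j / δ j) + 2 * ε j) ≤ f y - f x := by
      intro j
      set n := ⌈2 * (y - x) / δ j⌉₊ with hn
      have hd := hδ j
      have hn1 : 2 * (y - x) / δ j ≤ (n : ℝ) := Nat.le_ceil _
      have hn2 : (n : ℝ) < 2 * (y - x) / δ j + 1 :=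
        Nat.ceil_lt_add_one (div_nonneg (by linarith) hd.le)
      have hle : y - x ≤ n * (δ j / 2) := by
        rw [div_le_iff₀ hd] at hn1
        nlinarith
      have hB := lemB j n x y hx hxy hy1 hle
      have hεj := hε j
      have hbound : 2 * (n : ℝ) * ε j ≤ 4 * (y - x) * (ε j / δ j) + 2 * ε j := by
        have h4 : 4 * (y - x) * (ε j / δ j) = 2 * (2 * (y - x) / δ j) * ε j := by ring
        nlinarith
      linarith
    have hlim : Filter.Tendsto
        (fun j => (y - x) - (4 * (y - x) * (ε j / δ j) + 2 * ε j))
        Filter.atTop (nhds (y - x)) := by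
      have h1 : Filter.Tendsto (fun j => 4 * (y - x) * (ε j / δ j) + 2 * ε j)
          Filter.atTop (nhds 0) := by
        have ha := hratio.const_mul (4 * (y - x))
        have hb := hε0.const_mul 2
        have := ha.add hb
        simpa using this
      have := Filter.Tendsto.sub (tendsto_const_nhds (x := y - x) (f := Filter.atTop)) h1
      simpa using this
    exact le_of_tendsto hlim (Filter.Eventually.of_forall key)
end

section
/- Define m(k₁,k₂) := k₁/log(k₁+1) + k₂/log(k₂+1) − (k₁+k₂)/log(k₁+k₂+1) for positive real arguments. Then m is strictly increasing in each argument: for positive reals k₁, k₂ and a > 0, m(k₁+a, k₂) > m(k₁, k₂) and m(k₁, k₂+a) > m(k₁, k₂). -/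
noncomputable def mFun (k₁ k₂ : ℝ) : ℝ :=
  k₁ / Real.log (k₁ + 1) + k₂ / Real.log (k₂ + 1) - (k₁ + k₂) / Real.log (k₁ + k₂ + 1)

open Real Set

noncomputable def fF (x : ℝ) : ℝ := x / Real.log (x + 1)
noncomputable def FF (x : ℝ) : ℝ :=
  (Real.log (x + 1) - x / (x + 1)) / (Real.log (x + 1))^2

lemma logpos {x : ℝ} (hx : 0 < x) : 0 < Real.log (x + 1) :=
  Real.log_pos (by linarith)

-- log(1+x) > x/(1+x) for x > 0
lemma log_gt (x : ℝ) (hx : 0 < x) : x / (x + 1) < Real.log (x + 1) := by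
  have h1 : (0:ℝ) < (x+1)⁻¹ := by positivity
  have h2 : (x+1)⁻¹ ≠ 1 := by
    intro h
    have : x + 1 = 1 := by field_simp at h; linarith
    linarith
  have := Real.log_lt_sub_one_of_pos h1 h2
  rw [Real.log_inv] at this
  have hx1 : (0:ℝ) < x + 1 := by linarith
  have h3 : 1 - (x+1)⁻¹ < Real.log (x+1) := by linarith
  have e : x / (x+1) = 1 - (x+1)⁻¹ := by field_simp; ring
  linarith

lemma hasDerivAt_log1 {x : ℝ} (hx : -1 < x) :
    HasDerivAt (fun y : ℝ => Real.log (y + 1)) (1 / (x + 1)) x := by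
  have h := ((hasDerivAt_id x).add_const 1).log (by simp; intro h; linarith)
  simpa using h

noncomputable def gG (y : ℝ) : ℝ := (y + 2) * Real.log (y + 1) - 2 * y

lemma hasDerivAt_gG {x : ℝ} (hx : -1 < x) :
    HasDerivAt gG (Real.log (x + 1) + (x + 2) / (x + 1) - 2) x := by
  have h := (((hasDerivAt_id x).add_const 2).mul (hasDerivAt_log1 hx)).sub
    ((hasDerivAt_id x).const_mul 2)
  simp only [id_eq] at h
  have e : Real.log (x + 1) + (x + 2) / (x + 1) - 2
      = 1 * Real.log (x + 1) + (x + 2) * (1 / (x + 1)) - 2 * 1 := by ring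
  rw [e]
  exact h

lemma key_ineq (x : ℝ) (hx : 0 < x) : 2 * x < (x + 2) * Real.log (x + 1) := by
  have hmono : StrictMonoOn gG (Ici 0) := by
    apply strictMonoOn_of_deriv_pos (convex_Ici 0)
    · exact fun y hy => (hasDerivAt_gG (by simp at hy; linarith)).continuousAt.continuousWithinAt
    · intro y hy
      rw [interior_Ici] at hy
      have hy' : 0 < y := hy
      rw [(hasDerivAt_gG (by linarith)).deriv]
      have h1 := log_gt y hy'
      have h2 : (x:ℝ) = x := rfl
      have e : (y + 2) / (y + 1) - 2 = -(y / (y + 1)) := by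
        field_simp; ring
      linarith [e]
  have h0 : gG 0 < gG x := hmono (Set.mem_Ici.mpr (le_refl 0)) (Set.mem_Ici.mpr (le_of_lt hx)) hx
  simp [gG] at h0
  linarith

lemma hasDerivAt_fF {x : ℝ} (hx : 0 < x) : HasDerivAt fF (FF x) x := by
  have hL : Real.log (x + 1) ≠ 0 := ne_of_gt (logpos hx)
  have h := (hasDerivAt_id x).div (hasDerivAt_log1 (by linarith)) hL
  simp only [id_eq] at h
  have e : FF x = (1 * Real.log (x + 1) - x * (1 / (x + 1))) / (Real.log (x + 1))^2 := by
    unfold FF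
    congr 1
    field_simp
  rw [show fF = fun y => y / Real.log (y + 1) from rfl, e]
  exact h

lemma hasDerivAt_FF {x : ℝ} (hx : 0 < x) :
    HasDerivAt FF ((x / (x + 1)^2 * (Real.log (x + 1))^2 -
      (Real.log (x + 1) - x / (x + 1)) * (2 * Real.log (x + 1)^1 * (1 / (x + 1)))) /
      ((Real.log (x + 1))^2)^2) x := by
  have hx1 : x + 1 ≠ 0 := by positivity
  have hL : Real.log (x + 1) ≠ 0 := ne_of_gt (logpos hx)
  have hNum : HasDerivAt (fun y : ℝ => Real.log (y + 1) - y / (y + 1)) (x / (x + 1)^2) x := by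
    have hden : HasDerivAt (fun y : ℝ => y / (y + 1)) (1 / (x + 1)^2) x := by
      have h := (hasDerivAt_id x).div ((hasDerivAt_id x).add_const 1) (by simpa using hx1)
      simp only [id_eq] at h
      refine h.congr_deriv ?_
      ring
    have h := (hasDerivAt_log1 (by linarith)).sub hden
    refine h.congr_deriv ?_
    field_simp
    ring
  have hDen : HasDerivAt (fun y : ℝ => (Real.log (y + 1))^2)
      (2 * Real.log (x + 1)^1 * (1 / (x + 1))) x := by
    simpa [Pi.pow_def] using (hasDerivAt_log1 (show (-1:ℝ) < x by linarith)).pow 2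
  exact hNum.div hDen (by positivity)

lemma FF_deriv_neg {x : ℝ} (hx : 0 < x) :
    (x / (x + 1)^2 * (Real.log (x + 1))^2 -
      (Real.log (x + 1) - x / (x + 1)) * (2 * Real.log (x + 1)^1 * (1 / (x + 1)))) /
      ((Real.log (x + 1))^2)^2 < 0 := by
  have hL := logpos hx
  have hx1 : (0:ℝ) < x + 1 := by linarith
  have hkey := key_ineq x hx
  apply div_neg_of_neg_of_pos
  · have e : x / (x + 1)^2 * (Real.log (x + 1))^2 -
        (Real.log (x + 1) - x / (x + 1)) * (2 * Real.log (x + 1)^1 * (1 / (x + 1)))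
        = Real.log (x + 1) / (x + 1)^2 * (2 * x - (x + 2) * Real.log (x + 1)) := by
      field_simp
      ring
    rw [e]
    apply mul_neg_of_pos_of_neg
    · positivity
    · linarith
  · positivity

lemma FF_anti {u v : ℝ} (hu : 0 < u) (huv : u < v) : FF v < FF u := by
  have hanti : StrictAntiOn FF (Icc u v) := by
    apply strictAntiOn_of_deriv_neg (convex_Icc u v)
    · intro y hy
      exact (hasDerivAt_FF (lt_of_lt_of_le hu hy.1)).continuousAt.continuousWithinAt
    · intro y hy
      rw [interior_Icc] at hy
      have hy' : 0 < y := lt_trans hu hy.1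
      rw [(hasDerivAt_FF hy').deriv]
      exact FF_deriv_neg hy'
  exact hanti (by constructor <;> linarith) (by constructor <;> linarith) huv

lemma main_mono (k₁ k₂ a : ℝ) (hk₁ : 0 < k₁) (hk₂ : 0 < k₂) (ha : 0 < a) :
    mFun (k₁ + a) k₂ > mFun k₁ k₂ := by
  set G : ℝ → ℝ := fun x => fF x - fF (x + k₂) with hG
  have hGderiv : ∀ x : ℝ, 0 < x → HasDerivAt G (FF x - FF (x + k₂)) x := by
    intro x hx
    exact (hasDerivAt_fF hx).sub ((hasDerivAt_fF (by linarith)).comp_add_const x k₂)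
  have hmono : StrictMonoOn G (Icc k₁ (k₁ + a)) := by
    apply strictMonoOn_of_deriv_pos (convex_Icc _ _)
    · intro y hy
      exact (hGderiv y (lt_of_lt_of_le hk₁ hy.1)).continuousAt.continuousWithinAt
    · intro y hy
      rw [interior_Icc] at hy
      have hy' : 0 < y := lt_trans hk₁ hy.1
      rw [(hGderiv y hy').deriv]
      have := FF_anti hy' (show y < y + k₂ by linarith)
      linarith
  have h := hmono (by constructor <;> linarith) (by constructor <;> linarith)
    (show k₁ < k₁ + a by linarith)
  simp only [hG, fF] at h
  simp only [mFun, gt_iff_lt]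
  have e1 : k₁ + a + k₂ + 1 = k₁ + k₂ + a + 1 := by ring
  have e2 : k₁ + a + k₂ = k₁ + k₂ + a := by ring
  linarith [h]

theorem mFun_strictMono (k₁ k₂ a : ℝ) (hk₁ : 0 < k₁) (hk₂ : 0 < k₂) (ha : 0 < a) :
    mFun (k₁ + a) k₂ > mFun k₁ k₂ ∧ mFun k₁ (k₂ + a) > mFun k₁ k₂ := by
  have hcomm : ∀ x y : ℝ, mFun x y = mFun y x := by
    intro x y
    simp only [mFun]
    rw [show x + y = y + x by ring]
    ring
  refine ⟨main_mono k₁ k₂ a hk₁ hk₂ ha, ?_⟩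
  rw [hcomm k₁ (k₂ + a), hcomm k₁ k₂]
  exact main_mono k₂ k₁ a hk₂ hk₁ ha
end

section
/- Let ρ, μ > 0, ω ∈ [0,1)^d with ‖n·ω‖ ≥ exp(−ρ|n|^{1/(1+μ)}) for all nonzero n ∈ ℤ^d. Then there exists β₀ ∈ (0,1) such that for all β ∈ (0,β₀), all positive integers s ≥ ℓ ≥ 1, and all nonzero n ∈ ℤ^d with |n| ≤ 12s: if ‖n·ω‖ ≤ 2β^{ℓ/log(ℓ+1)} then s ≥ log(1/β)·ℓ^{1+μ/2}. -/
set_option maxHeartbeats 1000000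


/-- Distance from a real number to the nearest integer. -/
noncomputable def distInt (t : ℝ) : ℝ := |t - round t|

/-- Auxiliary: `log (x+1) ≤ (2/ε) x^ε` for `x ≥ 1`, `0 < ε ≤ 1`. -/
lemma log_add_one_le_rpow (ε x : ℝ) (hε : 0 < ε) (hε1 : ε ≤ 1) (hx : 1 ≤ x) :
    Real.log (x + 1) ≤ (2 / ε) * x ^ ε := by
  have hx1 : (0:ℝ) < x + 1 := by linarith
  have h1 : Real.log (x + 1) = (1/ε) * Real.log ((x+1) ^ ε) := by
    rw [Real.log_rpow hx1]; field_simp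
  have h2 : Real.log ((x+1) ^ ε) ≤ (x+1) ^ ε - 1 :=
    Real.log_le_sub_one_of_pos (Real.rpow_pos_of_pos hx1 ε)
  have h3 : (x+1) ^ ε ≤ (2*x) ^ ε :=
    Real.rpow_le_rpow (by linarith) (by linarith) hε.le
  have h4 : (2*x) ^ ε = 2 ^ ε * x ^ ε :=
    Real.mul_rpow (by norm_num) (by linarith)
  have h5 : (2:ℝ) ^ ε ≤ 2 := by
    calc (2:ℝ) ^ ε ≤ (2:ℝ) ^ (1:ℝ) :=
          Real.rpow_le_rpow_of_exponent_le (by norm_num) hε1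
      _ = 2 := Real.rpow_one 2
  have hxε : (0:ℝ) < x ^ ε := Real.rpow_pos_of_pos (by linarith) ε
  have h6 : (x+1) ^ ε ≤ 2 * x ^ ε := by
    calc (x+1) ^ ε ≤ 2 ^ ε * x ^ ε := h3.trans_eq h4
      _ ≤ 2 * x ^ ε := mul_le_mul_of_nonneg_right h5 hxε.le
  have h7 : Real.log ((x+1) ^ ε) ≤ 2 * x ^ ε := by linarith
  have hinv : (0:ℝ) < 1/ε := by positivity
  rw [h1]
  calc (1/ε) * Real.log ((x+1) ^ ε) ≤ (1/ε) * (2 * x ^ ε) :=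
        mul_le_mul_of_nonneg_left h7 hinv.le
    _ = (2/ε) * x ^ ε := by ring

theorem separation_estimate (d : ℕ) (ρ μ : ℝ) (hρ : 0 < ρ) (hμ : 0 < μ)
    (ω : Fin d → ℝ) (hω : ∀ i, 0 ≤ ω i ∧ ω i < 1)
    (hdio : ∀ n : Fin d → ℤ, n ≠ 0 →
      distInt (∑ i, (n i : ℝ) * ω i) ≥
        Real.exp (-ρ * ((∑ i, |n i| : ℤ) : ℝ) ^ (1 / (1 + μ)))) :
    ∃ β₀ : ℝ, 0 < β₀ ∧ β₀ < 1 ∧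
      ∀ β : ℝ, 0 < β → β < β₀ →
        ∀ s ℓ : ℕ, 1 ≤ ℓ → ℓ ≤ s →
          ∀ n : Fin d → ℤ, n ≠ 0 → ((∑ i, |n i| : ℤ) : ℝ) ≤ 12 * s →
            distInt (∑ i, (n i : ℝ) * ω i) ≤ 2 * β ^ ((ℓ : ℝ) / Real.log (ℓ + 1)) →
            (s : ℝ) ≥ Real.log (1 / β) * (ℓ : ℝ) ^ (1 + μ / 2) := by
  have h1μ : (0:ℝ) < 1 + μ := by linarith
  have h2μ : (0:ℝ) < 2 + 2*μ := by linarith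
  set ε : ℝ := μ / (2 + 2*μ) with hεdef
  have hε : 0 < ε := div_pos hμ h2μ
  have hε1 : ε ≤ 1 := by rw [hεdef, div_le_one h2μ]; linarith
  set A : ℝ := 96 * ρ / ε + 1 with hAdef
  have hApos : (0:ℝ) < A := by positivity
  have hA1 : (1:ℝ) ≤ A := by
    have h0 : 0 < 96 * ρ / ε := by positivity
    rw [hAdef]; linarith
  have hAval : ε * A = 96 * ρ + ε := by
    rw [hAdef]; field_simp
  set p : ℝ := (1 + μ) / μ with hpdef
  have hApow1 : (1:ℝ) ≤ A ^ p := Real.one_le_rpow hA1 (by positivity)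
  set L₀ : ℝ := A ^ p + 8 / ε with hL₀def
  have hL₀pos : 0 < L₀ := by rw [hL₀def]; positivity
  have hεL₀ : 8 < ε * L₀ := by
    have h8 : ε * (8 / ε) = 8 := by field_simp
    have h9 : 0 < ε * A ^ p := by positivity
    rw [hL₀def, mul_add, h8]; linarith
  refine ⟨Real.exp (-L₀), Real.exp_pos _, Real.exp_lt_one_iff.mpr (by linarith), ?_⟩
  intro β hβ hβlt s ℓ hℓ hℓs n hn hns hdist
  set L : ℝ := Real.log (1/β) with hLdef
  have hlogβ : Real.log β = -L := by
    rw [hLdef, one_div, Real.log_inv, neg_neg]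
  have hL : L₀ < L := by
    have h := Real.log_lt_log hβ hβlt
    rw [Real.log_exp, hlogβ] at h
    linarith
  have hLpos : 0 < L := lt_trans hL₀pos hL
  -- by contradiction
  by_contra hcon
  push_neg at hcon
  have hℓ1 : (1:ℝ) ≤ (ℓ:ℝ) := by exact_mod_cast hℓ
  have hℓpos : (0:ℝ) < (ℓ:ℝ) := by linarith
  have hs : (ℓ:ℝ) ≤ (s:ℝ) := by exact_mod_cast hℓs
  have hlogℓ : 0 < Real.log ((ℓ:ℝ) + 1) := Real.log_pos (by linarith)
  set q : ℝ := 1 / (1 + μ) with hqdef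
  have hq : 0 < q := by rw [hqdef]; positivity
  have hq1 : q ≤ 1 := by
    rw [hqdef, div_le_one h1μ]; linarith
  set X : ℝ := (12 * (s:ℝ)) ^ q with hXdef
  set e : ℝ := (ℓ:ℝ) / Real.log ((ℓ:ℝ) + 1) with hedef
  -- Step A: e * L ≤ log 2 + ρ * X
  have hnnonneg : (0:ℝ) ≤ ((∑ i, |n i| : ℤ) : ℝ) := by
    have : (0:ℤ) ≤ ∑ i, |n i| := Finset.sum_nonneg fun i _ => abs_nonneg _
    exact_mod_cast this
  have hmon : ((∑ i, |n i| : ℤ) : ℝ) ^ q ≤ X :=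
    Real.rpow_le_rpow hnnonneg hns hq.le
  have hexp : Real.exp (-ρ * X) ≤ 2 * β ^ e := by
    calc Real.exp (-ρ * X) ≤ Real.exp (-ρ * ((∑ i, |n i| : ℤ) : ℝ) ^ q) := by
          apply Real.exp_le_exp.mpr
          have := mul_le_mul_of_nonneg_left hmon hρ.le
          linarith
      _ ≤ distInt (∑ i, (n i : ℝ) * ω i) := hdio n hn
      _ ≤ 2 * β ^ e := hdist
  have hβe : 0 < β ^ e := Real.rpow_pos_of_pos hβ e
  have hmain : e * L ≤ Real.log 2 + ρ * X := by
    have h := Real.log_le_log (Real.exp_pos _) hexp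
    rw [Real.log_exp, Real.log_mul two_ne_zero (ne_of_gt hβe), Real.log_rpow hβ,
      hlogβ] at h
    linarith
  -- Step B: (ε/2) * T ≤ e, where T = ℓ^(1-ε)
  set T : ℝ := (ℓ:ℝ) ^ (1 - ε) with hTdef
  have hT1 : (1:ℝ) ≤ T := Real.one_le_rpow hℓ1 (by linarith)
  have hTpos : (0:ℝ) < T := by linarith
  have hlogle : Real.log ((ℓ:ℝ) + 1) ≤ (2/ε) * (ℓ:ℝ) ^ ε :=
    log_add_one_le_rpow ε (ℓ:ℝ) hε hε1 hℓ1
  have hTmul : T * (ℓ:ℝ) ^ ε = (ℓ:ℝ) := by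
    rw [hTdef, ← Real.rpow_add hℓpos]
    norm_num
  have hfrac : (ε/2) * T ≤ e := by
    rw [hedef, le_div_iff₀ hlogℓ]
    have hεℓpos : (0:ℝ) < (ℓ:ℝ) ^ ε := Real.rpow_pos_of_pos hℓpos ε
    calc (ε/2) * T * Real.log ((ℓ:ℝ) + 1) ≤ (ε/2) * T * ((2/ε) * (ℓ:ℝ) ^ ε) := by
          apply mul_le_mul_of_nonneg_left hlogle
          positivity
      _ = T * (ℓ:ℝ) ^ ε := by field_simp
      _ = (ℓ:ℝ) := hTmul
  -- Step C: X ≤ 12 * L^q * T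
  have hℓpow : (0:ℝ) ≤ (ℓ:ℝ) ^ (1 + μ/2) := (Real.rpow_pos_of_pos hℓpos _).le
  have hs12 : 12 * (s:ℝ) ≤ 12 * (L * (ℓ:ℝ) ^ (1 + μ/2)) := by linarith
  have hXle : X ≤ (12 * (L * (ℓ:ℝ) ^ (1 + μ/2))) ^ q :=
    Real.rpow_le_rpow (by positivity) hs12 hq.le
  have hexpeq : (1 + μ/2) * q = 1 - ε := by
    rw [hqdef, hεdef]; field_simp; ring
  have hsplit : (12 * (L * (ℓ:ℝ) ^ (1 + μ/2))) ^ q = 12 ^ q * (L ^ q * T) := by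
    rw [Real.mul_rpow (by norm_num) (by positivity),
      Real.mul_rpow hLpos.le hℓpow, ← Real.rpow_mul hℓpos.le, hexpeq, hTdef]
  have h12q : (12:ℝ) ^ q ≤ 12 := by
    calc (12:ℝ) ^ q ≤ (12:ℝ) ^ (1:ℝ) :=
          Real.rpow_le_rpow_of_exponent_le (by norm_num) hq1
      _ = 12 := Real.rpow_one 12
  have hLqnn : (0:ℝ) ≤ L ^ q := (Real.rpow_pos_of_pos hLpos q).le
  have hXfinal : X ≤ 12 * (L ^ q * T) := by
    calc X ≤ 12 ^ q * (L ^ q * T) := hXle.trans_eq hsplit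
      _ ≤ 12 * (L ^ q * T) := by
          apply mul_le_mul_of_nonneg_right h12q
          positivity
  -- Step: A * L^q ≤ L
  have haq : μ / (1 + μ) + q = 1 := by rw [hqdef]; field_simp; try ring
  have hap : p * (μ / (1 + μ)) = 1 := by rw [hpdef]; field_simp; try ring
  have hApL : A ^ p ≤ L := by
    have h8 : 0 < 8/ε := by positivity
    have h9 : A ^ p ≤ L₀ := by rw [hL₀def]; linarith
    linarith
  have hAeq : (A ^ p) ^ (μ / (1 + μ)) = A := by
    rw [← Real.rpow_mul hApos.le, hap, Real.rpow_one]
  have hAle : A ≤ L ^ (μ / (1 + μ)) := by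
    rw [← hAeq]
    exact Real.rpow_le_rpow (by positivity) hApL (by positivity)
  have hALq : A * L ^ q ≤ L := by
    calc A * L ^ q ≤ L ^ (μ / (1 + μ)) * L ^ q :=
          mul_le_mul_of_nonneg_right hAle hLqnn
      _ = L ^ (μ / (1 + μ) + q) := (Real.rpow_add hLpos _ _).symm
      _ = L := by rw [haq, Real.rpow_one]
  -- Step D: assemble
  have hlog2 : Real.log 2 ≤ 1 := by
    have h := Real.log_two_lt_d9
    linarith
  set Q : ℝ := L ^ q with hQdef
  have hF1 : (ε/2) * T * L ≤ 1 + 12 * ρ * Q * T := by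
    have h1 : (ε/2) * T * L ≤ e * L :=
      mul_le_mul_of_nonneg_right hfrac hLpos.le
    have h2 : ρ * X ≤ ρ * (12 * (Q * T)) := mul_le_mul_of_nonneg_left hXfinal hρ.le
    have h3 : ρ * (12 * (Q * T)) = 12 * ρ * Q * T := by ring
    linarith [hmain, hlog2]
  have hQ96 : 96 * ρ * Q ≤ ε * L := by
    have h1 : ε * (A * Q) ≤ ε * L := mul_le_mul_of_nonneg_left hALq hε.le
    have h2 : ε * (A * Q) = (96 * ρ + ε) * Q := by rw [← mul_assoc, hAval]
    have h3 : (96 * ρ + ε) * Q = 96 * ρ * Q + ε * Q := by ring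
    have h4 : 0 ≤ ε * Q := mul_nonneg hε.le hLqnn
    linarith
  have hεL : 8 < ε * L := by
    have := mul_lt_mul_of_pos_left hL hε
    linarith
  have hQT : 96 * ρ * Q * T ≤ ε * L * T :=
    mul_le_mul_of_nonneg_right hQ96 hTpos.le
  have h8T : 8 * T < ε * L * T := mul_lt_mul_of_pos_right hεL hTpos
  linarith [hF1, hQT, h8T, hT1]
end
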